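/- arXiv:1809.02901 — 2 statements merged into one kernel-verified Lean document; each statement's English description precedes it below -/
import Mathlib

section
/- If A₁ ≠ A₂ both lie in the domain of Ω (i.e. Z[A₁], Z[A₂] < ∞) and θ ∈ (0,1), then Ω[θA₁+(1-θ)A₂] > θΩ[A₁] + (1-θ)Ω[A₂], i.e. Ω is strictly concave on its domain, provided U is such that Z is finite on the segment. -/
open MeasureTheory Filter Matrix
open scoped ENNReal Classical

noncomputable def quadForm {N : ℕ} (A : Matrix (Fin N) (Fin N) ℝ) (x : Fin N → ℝ) : ℝ :=
  ∑ i, ∑ j, A i j * x i * x j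

noncomputable def gibbsZ (N : ℕ) (A : Matrix (Fin N) (Fin N) ℝ) (U : (Fin N → ℝ) → ℝ) : ℝ≥0∞ :=
  ∫⁻ x : Fin N → ℝ, ENNReal.ofReal (Real.exp (-(1/2) * quadForm A x - U x))

noncomputable def freeEnergy (N : ℕ) (A : Matrix (Fin N) (Fin N) ℝ) (U : (Fin N → ℝ) → ℝ) : EReal :=
  if gibbsZ N A U = ⊤ then ⊥ else ((- Real.log (gibbsZ N A U).toReal : ℝ) : EReal)

noncomputable def diffEntropy {d : ℕ} (μ : Measure (Fin d → ℝ)) : EReal :=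
  if μ ≪ (volume : Measure (Fin d → ℝ)) then
    ((∫⁻ x, ENNReal.ofReal (-(Real.log ((μ.rnDeriv volume x).toReal))) ∂μ : ℝ≥0∞) : EReal)
      - ((∫⁻ x, ENNReal.ofReal (Real.log ((μ.rnDeriv volume x).toReal)) ∂μ : ℝ≥0∞) : EReal)
  else ⊥

noncomputable def erealIntegral {d : ℕ} (f : (Fin d → ℝ) → ℝ) (μ : Measure (Fin d → ℝ)) : EReal :=
  ((∫⁻ x, ENNReal.ofReal (f x) ∂μ : ℝ≥0∞) : EReal) - ((∫⁻ x, ENNReal.ofReal (-f x) ∂μ : ℝ≥0∞) : EReal)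

noncomputable def secondMoment {d : ℕ} (μ : Measure (Fin d → ℝ)) : Matrix (Fin d) (Fin d) ℝ :=
  Matrix.of fun i j => ∫ x, x i * x j ∂μ

noncomputable def covMatrix {d : ℕ} (μ : Measure (Fin d → ℝ)) : Matrix (Fin d) (Fin d) ℝ :=
  Matrix.of fun i j => (∫ x, x i * x j ∂μ) - (∫ x, x i ∂μ) * (∫ x, x j ∂μ)

noncomputable def gaussDensity {d : ℕ} (m : Fin d → ℝ) (S : Matrix (Fin d) (Fin d) ℝ)
    (x : Fin d → ℝ) : ℝ :=
  ((2 * Real.pi) ^ d * S.det) ^ (-(1/2 : ℝ)) * Real.exp (-(1/2) * quadForm S⁻¹ (x - m))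

def IsGaussianPD {d : ℕ} (μ : Measure (Fin d → ℝ)) : Prop :=
  ∃ (m : Fin d → ℝ) (S : Matrix (Fin d) (Fin d) ℝ), S.PosDef ∧
    μ = volume.withDensity (fun x => ENNReal.ofReal (gaussDensity m S x))

noncomputable def relEntropy {α : Type*} [MeasurableSpace α] (ν μ : Measure α) : EReal :=
  if μ ≪ ν then
    ((∫⁻ x, ENNReal.ofReal (-(Real.log ((μ.rnDeriv ν x).toReal))) ∂μ : ℝ≥0∞) : EReal)
      - ((∫⁻ x, ENNReal.ofReal (Real.log ((μ.rnDeriv ν x).toReal)) ∂μ : ℝ≥0∞) : EReal)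
  else ⊥

noncomputable def lwF (d : ℕ) (U : (Fin d → ℝ) → ℝ) (G : Matrix (Fin d) (Fin d) ℝ) : EReal :=
  sSup ((fun μ => diffEntropy μ - erealIntegral U μ) ''
    {μ : Measure (Fin d → ℝ) | IsProbabilityMeasure μ ∧
      Integrable (fun x => ‖x‖ ^ 2) μ ∧ secondMoment μ = G})

noncomputable def lwPhi (d : ℕ) (U : (Fin d → ℝ) → ℝ) (G : Matrix (Fin d) (Fin d) ℝ) : EReal :=
  2 * lwF d U G - ((Real.log G.det : ℝ) : EReal)
    - ((d * Real.log (2 * Real.pi * Real.exp 1) : ℝ) : EReal)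

def WeakGrowth (N : ℕ) (U : (Fin N → ℝ) → ℝ) : Prop :=
  Measurable U ∧ (∃ C : ℝ, ∀ x, 0 ≤ U x + C * (1 + ‖x‖ ^ 2)) ∧
    IsOpen {A : Matrix (Fin N) (Fin N) ℝ | gibbsZ N A U ≠ ⊤}

/-! Hölder's inequality with exponents `1 / θ` and `1 / (1 - θ)` gives
`Z[θ A₁ + (1 - θ) A₂] ≤ Z[A₁] ^ θ * Z[A₂] ^ (1 - θ)`, so the segment stays in the domain. After
normalising the two Gibbs weights to probability densities `exp f` and `exp g`, this is the
integral of `exp (θ f + (1 - θ) g) ≤ θ exp f + (1 - θ) exp g`, which is strict wherever `f ≠ g`.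
Here `f - g` is `-½ xᵀ (A₁ - A₂) x` up to a constant; for symmetric `A₁ ≠ A₂` this continuous
function is not constant, so it differs from any constant on a nonempty open set. -/

lemma quadForm_sub {N : ℕ} (A B : Matrix (Fin N) (Fin N) ℝ) (x : Fin N → ℝ) :
    quadForm (A - B) x = quadForm A x - quadForm B x := by
  simp only [quadForm, Matrix.sub_apply, sub_mul, Finset.sum_sub_distrib]

lemma quadForm_smul_add_smul {N : ℕ} (a b : ℝ) (A B : Matrix (Fin N) (Fin N) ℝ)
    (x : Fin N → ℝ) : quadForm (a • A + b • B) x = a * quadForm A x + b * quadForm B x := by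
  simp only [quadForm, Matrix.add_apply, Matrix.smul_apply, smul_eq_mul, Finset.mul_sum,
    ← Finset.sum_add_distrib]
  exact Finset.sum_congr rfl fun _ _ => Finset.sum_congr rfl fun _ _ => by ring

lemma quadForm_single {N : ℕ} (D : Matrix (Fin N) (Fin N) ℝ) (i : Fin N) :
    quadForm D (Pi.single i 1) = D i i := by
  simp [quadForm, Pi.single_apply, mul_ite, Finset.sum_ite_eq']

lemma quadForm_single_add_single {N : ℕ} (D : Matrix (Fin N) (Fin N) ℝ) (i j : Fin N) :
    quadForm D (Pi.single i 1 + Pi.single j 1) = D i i + D i j + D j i + D j j := by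
  simp [quadForm, Pi.single_apply, mul_ite, mul_add,
    Finset.sum_add_distrib, Finset.sum_ite_eq']
  ring

@[fun_prop]
lemma continuous_quadForm {N : ℕ} (A : Matrix (Fin N) (Fin N) ℝ) :
    Continuous (quadForm A) := by
  unfold quadForm
  fun_prop

/-- By polarization, a symmetric matrix is determined by its quadratic form. -/
lemma Matrix.IsSymm.exists_quadForm_ne {N : ℕ} {D : Matrix (Fin N) (Fin N) ℝ} (hD : D.IsSymm)
    (hD0 : D ≠ 0) (κ : ℝ) : ∃ x, quadForm D x ≠ κ := by
  by_contra! hq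
  have hκ : κ = 0 := by simpa [quadForm] using (hq 0).symm
  subst hκ
  refine hD0 (Matrix.ext fun i j => ?_)
  have hii := hq (Pi.single i 1)
  rw [quadForm_single] at hii
  rcases eq_or_ne i j with rfl | hij
  · exact hii
  · have hjj := hq (Pi.single j 1)
    have hij' := hq (Pi.single i 1 + Pi.single j 1)
    rw [quadForm_single] at hjj
    rw [quadForm_single_add_single D i j] at hij'
    have hsymm : D j i = D i j := hD.apply i j
    simp only [zero_apply]
    linarith

lemma Matrix.IsSymm.volume_setOf_quadForm_ne_ne_zero {N : ℕ} {D : Matrix (Fin N) (Fin N) ℝ}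
    (hD : D.IsSymm) (hD0 : D ≠ 0) (κ : ℝ) : volume {x | quadForm D x ≠ κ} ≠ 0 :=
  (isOpen_ne_fun (continuous_quadForm D) continuous_const).measure_ne_zero volume
    (hD.exists_quadForm_ne hD0 κ)

section ExpIntegral

variable {α : Type*} [MeasurableSpace α] {μ : Measure α} {f g : α → ℝ}

lemma lintegral_ofReal_exp_add_const (f : α → ℝ) (c : ℝ) :
    ∫⁻ x, ENNReal.ofReal (Real.exp (f x + c)) ∂μ
      = (∫⁻ x, ENNReal.ofReal (Real.exp (f x)) ∂μ) * ENNReal.ofReal (Real.exp c) := by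
  simp_rw [Real.exp_add, ENNReal.ofReal_mul (Real.exp_pos _).le]
  exact lintegral_mul_const' _ _ ENNReal.ofReal_ne_top

lemma lintegral_ofReal_exp_pos (hμ : μ ≠ 0) (hf : Measurable f) :
    0 < ∫⁻ x, ENNReal.ofReal (Real.exp (f x)) ∂μ := by
  have hsupp : Function.support (fun x => ENNReal.ofReal (Real.exp (f x))) = Set.univ :=
    Set.eq_univ_of_forall fun x => by simp [Real.exp_pos]
  rw [lintegral_pos_iff_support (by fun_prop), hsupp]
  exact Measure.measure_univ_pos.mpr hμ

lemma lintegral_ofReal_exp_sub_log_eq_one (h0 : ∫⁻ x, ENNReal.ofReal (Real.exp (f x)) ∂μ ≠ 0)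
    (htop : ∫⁻ x, ENNReal.ofReal (Real.exp (f x)) ∂μ ≠ ⊤) :
    ∫⁻ x, ENNReal.ofReal
      (Real.exp (f x + -Real.log (∫⁻ x, ENNReal.ofReal (Real.exp (f x)) ∂μ).toReal)) ∂μ = 1 := by
  set Z := ∫⁻ x, ENNReal.ofReal (Real.exp (f x)) ∂μ
  have hZ : 0 < Z.toReal := ENNReal.toReal_pos h0 htop
  rw [lintegral_ofReal_exp_add_const, Real.exp_neg, Real.exp_log hZ, ENNReal.ofReal_inv_of_pos hZ,
    ENNReal.ofReal_toReal htop, ENNReal.mul_inv_cancel h0 htop]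

lemma lintegral_exp_convexComb_lt_one (hf : Measurable f) (hg : Measurable g)
    (hf1 : ∫⁻ x, ENNReal.ofReal (Real.exp (f x)) ∂μ = 1)
    (hg1 : ∫⁻ x, ENNReal.ofReal (Real.exp (g x)) ∂μ = 1)
    (hfg : μ {x | f x ≠ g x} ≠ 0) {θ : ℝ} (hθ : θ ∈ Set.Ioo (0 : ℝ) 1) :
    ∫⁻ x, ENNReal.ofReal (Real.exp (θ * f x + (1 - θ) * g x)) ∂μ < 1 := by
  obtain ⟨hθ0, hθ1⟩ := hθ
  have hθ' : 0 < 1 - θ := sub_pos.mpr hθ1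
  have hmix : ∫⁻ x, ENNReal.ofReal (θ * Real.exp (f x) + (1 - θ) * Real.exp (g x)) ∂μ = 1 := by
    have hsplit (x : α) : ENNReal.ofReal (θ * Real.exp (f x) + (1 - θ) * Real.exp (g x))
        = ENNReal.ofReal θ * ENNReal.ofReal (Real.exp (f x))
          + ENNReal.ofReal (1 - θ) * ENNReal.ofReal (Real.exp (g x)) := by
      rw [ENNReal.ofReal_add (by positivity) (by positivity), ENNReal.ofReal_mul hθ0.le,
        ENNReal.ofReal_mul hθ'.le]
    simp_rw [hsplit]
    rw [lintegral_add_left (by fun_prop), lintegral_const_mul _ (by fun_prop),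
      lintegral_const_mul _ (by fun_prop), hf1, hg1, mul_one, mul_one,
      ← ENNReal.ofReal_add hθ0.le hθ'.le, add_sub_cancel, ENNReal.ofReal_one]
  have hle : ∀ x, Real.exp (θ * f x + (1 - θ) * g x)
      ≤ θ * Real.exp (f x) + (1 - θ) * Real.exp (g x) := fun x =>
    convexOn_exp.2 (Set.mem_univ _) (Set.mem_univ _) hθ0.le hθ'.le (add_sub_cancel θ 1)
  have hlt : ∀ x, f x ≠ g x → Real.exp (θ * f x + (1 - θ) * g x)
      < θ * Real.exp (f x) + (1 - θ) * Real.exp (g x) := fun x hx =>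
    strictConvexOn_exp.2 (Set.mem_univ _) (Set.mem_univ _) hx hθ0 hθ' (add_sub_cancel θ 1)
  rw [← hmix]
  refine lintegral_strict_mono_of_ae_le_of_ae_lt_on (by fun_prop) ?_
    (ae_of_all _ fun x => ENNReal.ofReal_le_ofReal (hle x)) hfg
    (ae_of_all _ fun x hx => (ENNReal.ofReal_lt_ofReal_iff (by positivity)).mpr (hlt x hx))
  refine ne_top_of_le_ne_top ?_ (lintegral_mono fun x => ENNReal.ofReal_le_ofReal (hle x))
  rw [hmix]
  exact ENNReal.one_ne_top

theorem lintegral_exp_convexComb_lt (hf : Measurable f) (hg : Measurable g)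
    (hf_fin : ∫⁻ x, ENNReal.ofReal (Real.exp (f x)) ∂μ ≠ ⊤)
    (hg_fin : ∫⁻ x, ENNReal.ofReal (Real.exp (g x)) ∂μ ≠ ⊤)
    (hfg : ∀ κ, μ {x | f x - g x ≠ κ} ≠ 0) {θ : ℝ} (hθ : θ ∈ Set.Ioo (0 : ℝ) 1) :
    ∫⁻ x, ENNReal.ofReal (Real.exp (θ * f x + (1 - θ) * g x)) ∂μ
      < ENNReal.ofReal (Real.exp
          (θ * Real.log (∫⁻ x, ENNReal.ofReal (Real.exp (f x)) ∂μ).toReal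
            + (1 - θ) * Real.log (∫⁻ x, ENNReal.ofReal (Real.exp (g x)) ∂μ).toReal)) := by
  have hμ : μ ≠ 0 := fun h => hfg 0 (by simp [h])
  set Lf := Real.log (∫⁻ x, ENNReal.ofReal (Real.exp (f x)) ∂μ).toReal
  set Lg := Real.log (∫⁻ x, ENNReal.ofReal (Real.exp (g x)) ∂μ).toReal
  have hf1 := lintegral_ofReal_exp_sub_log_eq_one (lintegral_ofReal_exp_pos hμ hf).ne' hf_fin
  have hg1 := lintegral_ofReal_exp_sub_log_eq_one (lintegral_ofReal_exp_pos hμ hg).ne' hg_fin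
  have hne : μ {x | f x + -Lf ≠ g x + -Lg} ≠ 0 := fun h0 =>
    hfg (Lf - Lg) (measure_mono_null
      (fun x (hx : f x - g x ≠ Lf - Lg) (h : f x + -Lf = g x + -Lg) => hx (by linarith)) h0)
  have key := lintegral_exp_convexComb_lt_one (by fun_prop) (by fun_prop) hf1 hg1 hne hθ
  calc ∫⁻ x, ENNReal.ofReal (Real.exp (θ * f x + (1 - θ) * g x)) ∂μ
      = ∫⁻ x, ENNReal.ofReal (Real.exp
          ((θ * (f x + -Lf) + (1 - θ) * (g x + -Lg)) + (θ * Lf + (1 - θ) * Lg))) ∂μ := by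
        congr! 4; ring
    _ = (∫⁻ x, ENNReal.ofReal (Real.exp (θ * (f x + -Lf) + (1 - θ) * (g x + -Lg))) ∂μ)
          * ENNReal.ofReal (Real.exp (θ * Lf + (1 - θ) * Lg)) :=
        lintegral_ofReal_exp_add_const _ _
    _ < 1 * ENNReal.ofReal (Real.exp (θ * Lf + (1 - θ) * Lg)) :=
        ENNReal.mul_lt_mul_left (by simp [Real.exp_pos]) ENNReal.ofReal_ne_top key
    _ = _ := one_mul _

end ExpIntegral

theorem freeEnergy_strictConcave_general (N : ℕ) (U : (Fin N → ℝ) → ℝ) (hU : Measurable U)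
    (A₁ A₂ : Matrix (Fin N) (Fin N) ℝ) (h₁ : A₁.IsSymm) (h₂ : A₂.IsSymm)
    (hne : A₁ ≠ A₂)
    (hZ₁ : gibbsZ N A₁ U ≠ ⊤) (hZ₂ : gibbsZ N A₂ U ≠ ⊤)
    (θ : ℝ) (hθ : θ ∈ Set.Ioo (0 : ℝ) 1) :
    ((θ : ℝ) : EReal) * freeEnergy N A₁ U + (((1 - θ : ℝ)) : EReal) * freeEnergy N A₂ U
      < freeEnergy N (θ • A₁ + (1 - θ) • A₂) U := by
  have hnonconst (κ : ℝ) : volume {x | (-(1/2) * quadForm A₁ x - U x)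
      - (-(1/2) * quadForm A₂ x - U x) ≠ κ} ≠ 0 := fun h0 =>
    (h₁.sub h₂).volume_setOf_quadForm_ne_ne_zero (sub_ne_zero.mpr hne) (-2 * κ) <|
      measure_mono_null (fun x hx => by
        simp only [Set.mem_ofPred_eq, quadForm_sub] at hx ⊢; contrapose! hx; linarith) h0
  have hexponent (x : Fin N → ℝ) :
      θ * (-(1/2) * quadForm A₁ x - U x) + (1 - θ) * (-(1/2) * quadForm A₂ x - U x)
        = -(1/2) * quadForm (θ • A₁ + (1 - θ) • A₂) x - U x := by
    rw [quadForm_smul_add_smul]; ring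
  have key := lintegral_exp_convexComb_lt (by fun_prop) (by fun_prop) hZ₁ hZ₂ hnonconst hθ
  simp_rw [hexponent] at key
  have hZθ : gibbsZ N (θ • A₁ + (1 - θ) • A₂) U ≠ ⊤ := ne_top_of_lt key
  have hZθ_pos :=
    ENNReal.toReal_pos (lintegral_ofReal_exp_pos (NeZero.ne volume) (by fun_prop)).ne' hZθ
  have hlog := Real.log_lt_log hZθ_pos (ENNReal.toReal_lt_of_lt_ofReal key)
  rw [Real.log_exp] at hlog
  rw [freeEnergy, freeEnergy, freeEnergy, if_neg hZ₁, if_neg hZ₂, if_neg hZθ,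
    ← EReal.coe_mul, ← EReal.coe_mul, ← EReal.coe_add, EReal.coe_lt_coe_iff]
  unfold gibbsZ
  linarith

/-- strict concavity of the free energy on its domain. -/
theorem freeEnergy_strictConcave (N : ℕ) (U : (Fin N → ℝ) → ℝ) (hU : Measurable U)
    (A₁ A₂ : Matrix (Fin N) (Fin N) ℝ) (h₁ : A₁.IsSymm) (h₂ : A₂.IsSymm)
    (hne : A₁ ≠ A₂)
    (hZ₁ : gibbsZ N A₁ U ≠ ⊤) (hZ₂ : gibbsZ N A₂ U ≠ ⊤)
    (θ : ℝ) (hθ : θ ∈ Set.Ioo (0 : ℝ) 1)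
    (hZθ : gibbsZ N (θ • A₁ + (1 - θ) • A₂) U ≠ ⊤) :
    ((θ : ℝ) : EReal) * freeEnergy N A₁ U + (((1 - θ : ℝ)) : EReal) * freeEnergy N A₂ U
      < freeEnergy N (θ • A₁ + (1 - θ) • A₂) U :=
  freeEnergy_strictConcave_general N U hU A₁ A₂ h₁ h₂ hne hZ₁ hZ₂ θ hθ
end

section
/- Let G ∈ S^N_{++} and let U : ℝ^N → ℝ satisfy the weak growth condition. For any invertible matrix T ∈ ℝ^{N×N}, the Luttinger–Ward functional Φ[G,U] := 2F[G,U] - Tr[log G] - N log(2πe) satisfies the transformation rule Φ[TGT*, U] = Φ[G, U∘T], where F[G,U] = sup_{μ: ∫xxᵀdμ = G} [H(μ) - ∫ U dμ]. -/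
open MeasureTheory Filter Matrix
open scoped ENNReal Classical

/-!
The linear change of variables `x ↦ T x` is a bijection between the probability measures with
second moment `G` and those with second moment `T G Tᵀ`. It turns `∫ U d(T₊μ)` into
`∫ U ∘ T dμ`, and since the density of `T₊μ` is `|det T|⁻¹ (ρ ∘ T⁻¹)` it raises the differential
entropy by `log |det T|`. Hence `F[T G Tᵀ, U] = F[G, U ∘ T] + log |det T|`, and the doubled shift
cancels against `log det (T G Tᵀ) = log det G + 2 log |det T|` in `Φ`.
-/

namespace EReal

noncomputable def addCoeOrderIso (c : ℝ) : EReal ≃o EReal where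
  toFun x := x + c
  invFun x := x - c
  left_inv _ := add_sub_cancel_right
  right_inv _ := sub_add_cancel
  map_rel_iff' {x y} := by
    show x + c ≤ y + c ↔ x ≤ y
    exact ⟨fun h => by simpa only [add_sub_cancel_right] using sub_le_sub h (le_refl (c : EReal)),
      fun h => add_le_add_left h _⟩

lemma sSup_image_add_coe (S : Set EReal) (c : ℝ) :
    sSup ((· + (c : EReal)) '' S) = sSup S + c := by
  rw [sSup_image]
  exact ((addCoeOrderIso c).map_sSup S).symm

lemma add_coe_sub (x y : EReal) (c : ℝ) : x + c - y = x - y + c := by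
  induction x <;> induction y <;> simp [← EReal.coe_add, ← EReal.coe_sub]; ring

lemma two_mul_add_coe_sub_coe (x : EReal) (a b : ℝ) :
    2 * (x + a) - ((b + 2 * a : ℝ) : EReal) = 2 * x - b := by
  have two : (2 : EReal) = ((2 : ℝ) : EReal) := rfl
  induction x
  · rw [bot_add, two, coe_mul_bot_of_pos two_pos, bot_sub, bot_sub]
  · rw [two, ← coe_add, ← coe_mul, ← coe_sub, ← coe_mul, ← coe_sub]; ring_nf
  · rw [top_add_coe, two, coe_mul_top_of_pos two_pos, top_sub_coe, top_sub_coe]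

end EReal

section LintegralOfReal

variable {α : Type*} [MeasurableSpace α] {μ : Measure α}

lemma lintegral_ofReal_add_le [IsFiniteMeasure μ] (f : α → ℝ) (c : ℝ) :
    ∫⁻ x, ENNReal.ofReal (f x + c) ∂μ
      ≤ ∫⁻ x, ENNReal.ofReal (f x) ∂μ + ENNReal.ofReal c * μ Set.univ :=
  calc ∫⁻ x, ENNReal.ofReal (f x + c) ∂μ
      ≤ ∫⁻ x, ENNReal.ofReal (f x) + ENNReal.ofReal c ∂μ :=
        lintegral_mono fun _ => ENNReal.ofReal_add_le
    _ = _ := by rw [lintegral_add_right _ measurable_const, lintegral_const]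

lemma lintegral_ofReal_add_eq_top_iff [IsFiniteMeasure μ] (f : α → ℝ) (c : ℝ) :
    ∫⁻ x, ENNReal.ofReal (f x + c) ∂μ = ⊤ ↔ ∫⁻ x, ENNReal.ofReal (f x) ∂μ = ⊤ := by
  have of_add : ∀ (g : α → ℝ) (a : ℝ), ∫⁻ x, ENNReal.ofReal (g x + a) ∂μ = ⊤ →
      ∫⁻ x, ENNReal.ofReal (g x) ∂μ = ⊤ := fun g a h => by
    by_contra hg
    have hle := lintegral_ofReal_add_le (μ := μ) g a
    rw [h, top_le_iff] at hle
    exact ENNReal.add_ne_top.2 ⟨hg, ENNReal.mul_ne_top ENNReal.ofReal_ne_top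
      (measure_ne_top μ _)⟩ hle
  refine ⟨of_add f c, fun h => of_add (fun x => f x + c) (-c) ?_⟩
  simpa only [add_neg_cancel_right] using h

lemma integrable_of_lintegral_ofReal_ne_top {f : α → ℝ} (hf : AEStronglyMeasurable f μ)
    (hpos : ∫⁻ x, ENNReal.ofReal (f x) ∂μ ≠ ⊤) (hneg : ∫⁻ x, ENNReal.ofReal (-f x) ∂μ ≠ ⊤) :
    Integrable f μ := by
  refine ⟨hf, ?_⟩
  calc ∫⁻ x, ‖f x‖ₑ ∂μ ≤ ∫⁻ x, ENNReal.ofReal (f x) + ENNReal.ofReal (-f x) ∂μ := by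
        refine lintegral_mono fun x => ?_
        rw [Real.enorm_eq_ofReal_abs, abs_eq_max_neg, ENNReal.ofReal_max]
        exact max_le_add_of_nonneg zero_le zero_le
    _ = ∫⁻ x, ENNReal.ofReal (f x) ∂μ + ∫⁻ x, ENNReal.ofReal (-f x) ∂μ :=
        lintegral_add_left' hf.aemeasurable.ennreal_ofReal _
    _ < ⊤ := ENNReal.add_lt_top.2 ⟨hpos.lt_top, hneg.lt_top⟩

end LintegralOfReal

section ERealIntegral

variable {d : ℕ} {μ : Measure (Fin d → ℝ)}

lemma erealIntegral_congr_ae {f g : (Fin d → ℝ) → ℝ} (h : f =ᵐ[μ] g) :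
    erealIntegral f μ = erealIntegral g μ := by
  have hpos : ∫⁻ x, ENNReal.ofReal (f x) ∂μ = ∫⁻ x, ENNReal.ofReal (g x) ∂μ :=
    lintegral_congr_ae (h.mono fun x hx => by simp only [hx])
  have hneg : ∫⁻ x, ENNReal.ofReal (-f x) ∂μ = ∫⁻ x, ENNReal.ofReal (-g x) ∂μ :=
    lintegral_congr_ae (h.mono fun x hx => by simp only [hx])
  rw [erealIntegral, erealIntegral, hpos, hneg]

lemma erealIntegral_map_equiv (e : (Fin d → ℝ) ≃ᵐ (Fin d → ℝ)) (f : (Fin d → ℝ) → ℝ) :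
    erealIntegral f (μ.map e) = erealIntegral (fun x => f (e x)) μ := by
  simp only [erealIntegral, lintegral_map_equiv]

lemma erealIntegral_of_integrable {f : (Fin d → ℝ) → ℝ} (hf : Integrable f μ) :
    erealIntegral f μ = ((∫ x, f x ∂μ : ℝ) : EReal) := by
  have hpos : ∫⁻ x, ENNReal.ofReal (f x) ∂μ ≠ ⊤ :=
    ((lintegral_ofReal_le_lintegral_enorm f).trans_lt hf.2).ne
  have hneg : ∫⁻ x, ENNReal.ofReal (-f x) ∂μ ≠ ⊤ :=
    ((lintegral_ofReal_le_lintegral_enorm _).trans_lt hf.neg.2).ne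
  rw [erealIntegral, integral_eq_lintegral_pos_part_sub_lintegral_neg_part hf, EReal.coe_sub,
    EReal.coe_ennreal_toReal hpos, EReal.coe_ennreal_toReal hneg]

lemma erealIntegral_add_const [IsProbabilityMeasure μ] {f : (Fin d → ℝ) → ℝ}
    (hf : AEStronglyMeasurable f μ) (c : ℝ) :
    erealIntegral (fun x => f x + c) μ = erealIntegral f μ + c := by
  have hneg_iff := lintegral_ofReal_add_eq_top_iff (μ := μ) (fun x => -f x) (-c)
  simp only [← neg_add] at hneg_iff
  -- An infinite negative part makes both sides `⊥` (as `x - ⊤ = ⊥` in `EReal`); failing that,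
  -- an infinite positive part makes both sides `⊤`.
  by_cases hneg : ∫⁻ x, ENNReal.ofReal (-f x) ∂μ = ⊤
  · simp only [erealIntegral, hneg_iff.2 hneg, hneg, EReal.coe_ennreal_top, EReal.sub_top,
      EReal.bot_add]
  by_cases hpos : ∫⁻ x, ENNReal.ofReal (f x) ∂μ = ⊤
  · have hneg' : ∫⁻ x, ENNReal.ofReal (-(f x + c)) ∂μ ≠ ⊤ := fun h => hneg (hneg_iff.1 h)
    rw [erealIntegral, erealIntegral, (lintegral_ofReal_add_eq_top_iff f c).2 hpos, hpos,
      EReal.coe_ennreal_top, EReal.top_sub (EReal.coe_ennreal_eq_top_iff.not.2 hneg'),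
      EReal.top_sub (EReal.coe_ennreal_eq_top_iff.not.2 hneg),
      EReal.top_add_coe]
  have hint : Integrable f μ := integrable_of_lintegral_ofReal_ne_top hf hpos hneg
  have hint_add : Integrable (fun x => f x + c) μ := hint.add (integrable_const c)
  rw [erealIntegral_of_integrable hint, erealIntegral_of_integrable hint_add,
    integral_add hint (integrable_const c), integral_const, probReal_univ, one_smul, EReal.coe_add]

end ERealIntegral

section ScalingEquiv

variable {α β : Type*} [MeasurableSpace α] [MeasurableSpace β]

theorem MeasurableEquiv.map_absolutelyContinuous_iff_of_map_eq_smul (e : α ≃ᵐ β)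
    {μ ν : Measure α} {ν' : Measure β} {c : ℝ≥0∞} (hc₀ : c ≠ 0) (h : ν.map e = c • ν') :
    μ.map e ≪ ν' ↔ μ ≪ ν := by
  refine ⟨fun hμ => ?_, fun hμ => ?_⟩
  · have hμe : μ.map e ≪ ν.map e := h ▸ hμ.trans (Measure.absolutelyContinuous_smul hc₀)
    simpa only [MeasurableEquiv.map_symm_map] using hμe.map e.symm.measurable
  · exact (h ▸ hμ.map e.measurable).trans Measure.smul_absolutelyContinuous

theorem MeasurableEquiv.rnDeriv_map_comp_of_map_eq_smul (e : α ≃ᵐ β) (μ ν : Measure α)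
    {ν' : Measure β} [SigmaFinite μ] [SigmaFinite ν] {c : ℝ≥0∞} (hc₀ : c ≠ 0) (hc : c ≠ ∞)
    (h : ν.map e = c • ν') :
    (fun x => (μ.map e).rnDeriv ν' (e x)) =ᵐ[ν] fun x => c * μ.rnDeriv ν x := by
  have hν' : ν' = c⁻¹ • ν.map e := by
    rw [h, smul_smul, ENNReal.inv_mul_cancel hc₀ hc, one_smul]
  have := e.sigmaFinite_map (μ := μ)
  have := e.sigmaFinite_map (μ := ν)
  have hsmul := Measure.rnDeriv_smul_right_of_ne_top' (μ.map e) (ν.map e)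
    (ENNReal.inv_ne_zero.2 hc) (ENNReal.inv_ne_top.2 hc₀)
  rw [← hν', inv_inv, EventuallyEq, e.measurableEmbedding.ae_map_iff] at hsmul
  filter_upwards [hsmul, e.measurableEmbedding.rnDeriv_map μ ν] with x h1 h2
  rw [h1, Pi.smul_apply, smul_eq_mul, h2]

end ScalingEquiv

section DiffEntropy

variable {d : ℕ}

lemma diffEntropy_of_absolutelyContinuous {μ : Measure (Fin d → ℝ)} (hμ : μ ≪ volume) :
    diffEntropy μ = erealIntegral (fun x => -Real.log (μ.rnDeriv volume x).toReal) μ := by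
  simp only [diffEntropy, if_pos hμ, erealIntegral, neg_neg]

lemma diffEntropy_map_of_map_volume_eq_smul (e : (Fin d → ℝ) ≃ᵐ (Fin d → ℝ)) {a : ℝ}
    (ha : 0 < a) (he : volume.map e = ENNReal.ofReal a⁻¹ • volume)
    (μ : Measure (Fin d → ℝ)) [IsProbabilityMeasure μ] :
    diffEntropy (μ.map e) = diffEntropy μ + Real.log a := by
  have hc₀ : ENNReal.ofReal a⁻¹ ≠ 0 := (ENNReal.ofReal_pos.2 (inv_pos.2 ha)).ne'
  have hac := e.map_absolutelyContinuous_iff_of_map_eq_smul (μ := μ) hc₀ he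
  by_cases hμ : μ ≪ volume
  swap
  · rw [diffEntropy, if_neg (hac.not.2 hμ), diffEntropy, if_neg hμ, EReal.bot_add]
  have hρ := e.rnDeriv_map_comp_of_map_eq_smul μ volume hc₀ ENNReal.ofReal_ne_top he
  have hlog : (fun x => -Real.log ((μ.map e).rnDeriv volume (e x)).toReal)
      =ᵐ[μ] fun x => -Real.log (μ.rnDeriv volume x).toReal + Real.log a := by
    filter_upwards [hμ.ae_le hρ, Measure.rnDeriv_pos hμ,
      hμ.ae_le (Measure.rnDeriv_lt_top μ volume)] with x h1 h2 h3
    rw [h1, ENNReal.toReal_mul, ENNReal.toReal_ofReal (inv_nonneg.2 ha.le),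
      Real.log_mul (inv_ne_zero ha.ne') (ENNReal.toReal_pos h2.ne' h3.ne).ne', Real.log_inv]
    ring
  have hmeas : AEStronglyMeasurable (fun x => -Real.log (μ.rnDeriv volume x).toReal) μ :=
    (Measure.measurable_rnDeriv μ volume).ennreal_toReal.log.neg.aestronglyMeasurable
  rw [diffEntropy_of_absolutelyContinuous (hac.2 hμ), erealIntegral_map_equiv,
    erealIntegral_congr_ae hlog, erealIntegral_add_const hmeas,
    diffEntropy_of_absolutelyContinuous hμ]

end DiffEntropy

namespace Matrix

variable {d : ℕ}

noncomputable def mulVecMeasurableEquiv (T : Matrix (Fin d) (Fin d) ℝ) (hT : IsUnit T.det) :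
    (Fin d → ℝ) ≃ᵐ (Fin d → ℝ) where
  toFun := T.mulVec
  invFun := T⁻¹.mulVec
  left_inv x := by rw [mulVec_mulVec, nonsing_inv_mul _ hT, one_mulVec]
  right_inv x := by rw [mulVec_mulVec, mul_nonsing_inv _ hT, one_mulVec]
  measurable_toFun := (by fun_prop : Measurable T.mulVec)
  measurable_invFun := (by fun_prop : Measurable T⁻¹.mulVec)

lemma map_volume_mulVec (T : Matrix (Fin d) (Fin d) ℝ) (hT : IsUnit T.det) :
    volume.map (mulVecMeasurableEquiv T hT) = ENNReal.ofReal |T.det|⁻¹ • volume := by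
  rw [← abs_inv, ← Real.map_matrix_volume_pi_eq_smul_volume_pi hT.ne_zero]
  rfl

end Matrix

section SecondMoment

variable {d : ℕ} {μ : Measure (Fin d → ℝ)}

lemma memLp_id_two_of_integrable_norm_sq (h : Integrable (fun x => ‖x‖ ^ 2) μ) :
    MemLp id 2 μ :=
  (memLp_two_iff_integrable_sq_norm aestronglyMeasurable_id).2 h

lemma integrable_norm_sq_map_mulVec (T : Matrix (Fin d) (Fin d) ℝ)
    (h : Integrable (fun x => ‖x‖ ^ 2) μ) :
    Integrable (fun x => ‖x‖ ^ 2) (μ.map T.mulVec) := by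
  rw [integrable_map_measure (by fun_prop) (by fun_prop)]
  exact (memLp_two_iff_integrable_sq_norm (by fun_prop)).1
    ((toLin' T).toContinuousLinearMap.comp_memLp' (memLp_id_two_of_integrable_norm_sq h))

lemma integrable_mul_apply_of_integrable_norm_sq (h : Integrable (fun x => ‖x‖ ^ 2) μ)
    (k l : Fin d) : Integrable (fun x => x k * x l) μ := by
  have hL2 := memLp_id_two_of_integrable_norm_sq h
  have coord (i : Fin d) : MemLp (fun x : Fin d → ℝ => x i) 2 μ :=
    (ContinuousLinearMap.proj (R := ℝ) (φ := fun _ : Fin d => ℝ) i).comp_memLp' hL2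
  exact (coord k).integrable_mul (coord l)

lemma secondMoment_map_mulVec (T : Matrix (Fin d) (Fin d) ℝ)
    (h : Integrable (fun x => ‖x‖ ^ 2) μ) :
    secondMoment (μ.map T.mulVec) = T * secondMoment μ * Tᵀ := by
  have hint := integrable_mul_apply_of_integrable_norm_sq h
  ext i j
  rw [secondMoment, of_apply, integral_map (by fun_prop) (by fun_prop)]
  calc ∫ x, T.mulVec x i * T.mulVec x j ∂μ
      = ∫ x, ∑ k, ∑ l, T i k * T j l * (x k * x l) ∂μ := by
        congr 1 with x
        simp only [mulVec, dotProduct, Finset.sum_mul_sum]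
        exact Finset.sum_congr rfl fun k _ => Finset.sum_congr rfl fun l _ => by ring
    _ = ∑ k, ∑ l, T i k * T j l * ∫ x, x k * x l ∂μ := by
        rw [integral_finsetSum _ fun k _ => integrable_finsetSum _ fun l _ =>
          (hint k l).const_mul _]
        refine Finset.sum_congr rfl fun k _ => ?_
        rw [integral_finsetSum _ fun l _ => (hint k l).const_mul _]
        simp only [integral_const_mul]
    _ = (T * secondMoment μ * Tᵀ) i j := by
        simp only [mul_apply, transpose_apply, secondMoment, of_apply, Finset.sum_mul]
        rw [Finset.sum_comm]
        exact Finset.sum_congr rfl fun k _ => Finset.sum_congr rfl fun l _ => by ring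

end SecondMoment

section LuttingerWard

variable {d : ℕ}

def secondMomentSet (d : ℕ) (G : Matrix (Fin d) (Fin d) ℝ) : Set (Measure (Fin d → ℝ)) :=
  {μ | IsProbabilityMeasure μ ∧ Integrable (fun x => ‖x‖ ^ 2) μ ∧ secondMoment μ = G}

lemma mapsTo_map_mulVec_secondMomentSet (T G : Matrix (Fin d) (Fin d) ℝ) :
    Set.MapsTo (Measure.map T.mulVec) (secondMomentSet d G)
      (secondMomentSet d (T * G * Tᵀ)) := by
  rintro μ ⟨hμ, hint, rfl⟩
  exact ⟨Measure.isProbabilityMeasure_map (by fun_prop), integrable_norm_sq_map_mulVec T hint,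
    secondMoment_map_mulVec T hint⟩

lemma image_map_mulVec_secondMomentSet {T : Matrix (Fin d) (Fin d) ℝ} (hT : IsUnit T.det)
    (G : Matrix (Fin d) (Fin d) ℝ) :
    Measure.map T.mulVec '' secondMomentSet d G = secondMomentSet d (T * G * Tᵀ) := by
  refine (mapsTo_map_mulVec_secondMomentSet T G).image_subset.antisymm
    fun μ hμ => ⟨μ.map T⁻¹.mulVec, ?_, (mulVecMeasurableEquiv T hT).map_map_symm⟩
  have hTt : IsUnit Tᵀ.det := by rwa [det_transpose]
  have hconj : T⁻¹ * (T * G * Tᵀ) * T⁻¹ᵀ = G := by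
    rw [transpose_nonsing_inv]
    simp only [Matrix.mul_assoc]
    rw [mul_nonsing_inv _ hTt, Matrix.mul_one, nonsing_inv_mul_cancel_left _ _ hT]
  simpa only [hconj] using mapsTo_map_mulVec_secondMomentSet T⁻¹ _ hμ

lemma diffEntropy_sub_erealIntegral_map_mulVec {T : Matrix (Fin d) (Fin d) ℝ}
    (hT : IsUnit T.det) (U : (Fin d → ℝ) → ℝ) (μ : Measure (Fin d → ℝ))
    [IsProbabilityMeasure μ] :
    diffEntropy (μ.map T.mulVec) - erealIntegral U (μ.map T.mulVec)
      = diffEntropy μ - erealIntegral (fun x => U (T.mulVec x)) μ + Real.log |T.det| := by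
  have hmap : μ.map T.mulVec = μ.map (mulVecMeasurableEquiv T hT) := rfl
  rw [hmap, diffEntropy_map_of_map_volume_eq_smul _ (abs_pos.2 hT.ne_zero)
    (map_volume_mulVec T hT), erealIntegral_map_equiv, EReal.add_coe_sub]
  rfl

lemma lwF_mul_mul_transpose {T : Matrix (Fin d) (Fin d) ℝ} (hT : IsUnit T.det)
    (U : (Fin d → ℝ) → ℝ) (G : Matrix (Fin d) (Fin d) ℝ) :
    lwF d U (T * G * Tᵀ) = lwF d (fun x => U (T.mulVec x)) G + Real.log |T.det| := by
  rw [lwF, lwF, ← EReal.sSup_image_add_coe, Set.image_image]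
  change sSup (_ '' secondMomentSet d (T * G * Tᵀ)) = sSup (_ '' secondMomentSet d G)
  rw [← image_map_mulVec_secondMomentSet hT, Set.image_image]
  refine congrArg sSup (Set.image_congr fun μ hμ => ?_)
  have := hμ.1
  exact diffEntropy_sub_erealIntegral_map_mulVec hT U μ

end LuttingerWard

theorem lwPhi_transformation_general (N : ℕ) (U : (Fin N → ℝ) → ℝ)
    (G : Matrix (Fin N) (Fin N) ℝ) (hG : G.PosDef)
    (T : Matrix (Fin N) (Fin N) ℝ) (hT : IsUnit T.det) :
    lwPhi N U (T * G * Tᵀ) = lwPhi N (fun x => U (T.mulVec x)) G := by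
  have hlog_det : Real.log (T * G * Tᵀ).det = Real.log G.det + 2 * Real.log |T.det| := by
    rw [det_mul, det_mul, det_transpose,
      Real.log_mul (mul_ne_zero hT.ne_zero hG.det_pos.ne') hT.ne_zero,
      Real.log_mul hT.ne_zero hG.det_pos.ne', ← Real.log_abs T.det]
    ring
  rw [lwPhi, lwPhi, lwF_mul_mul_transpose hT, hlog_det, EReal.two_mul_add_coe_sub_coe]

/-- the transformation rule for the Luttinger–Ward functional:
`Φ[TGT*, U] = Φ[G, U∘T]` for invertible `T`. -/
theorem lwPhi_transformation (N : ℕ) (U : (Fin N → ℝ) → ℝ) (hU : WeakGrowth N U)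
    (G : Matrix (Fin N) (Fin N) ℝ) (hG : G.PosDef)
    (T : Matrix (Fin N) (Fin N) ℝ) (hT : IsUnit T.det) :
    lwPhi N U (T * G * Tᵀ) = lwPhi N (fun x => U (T.mulVec x)) G :=
  lwPhi_transformation_general N U G hG T hT
end
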